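/- On state space {1,…,N} with energies λ_1 ≤ … ≤ λ_N, inverse temperature β ≥ 0, and Gibbs distribution π_i = e^{−βλ_i}/Z(β) with Z(β) = ∑_i e^{−βλ_i}, consider the Metropolis–Hastings chain with p_{ij} = (1/(2N)) min(1, e^{−β(λ_j − λ_i)}) for i ≠ j and p_{ii} = 1 − ∑_{j≠i} p_{ij}. Then the spectral gap of this chain is at least (1/(2N)) ∑_{i=1}^N e^{−β(λ_i − λ_1)}. -/

import Mathlib

/-!
Doeblin minorization. If a matrix with unit row sums satisfies `p_{ij} ≥ c π_j` for a
probability vector `π`, then on vectors with `∑ π_j v_j = 0` it acts as `p_{ij} - c π_j`,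
a nonnegative matrix with row sums `1 - c`; evaluating the eigenvalue equation at a
coordinate where `|v|` is maximal gives `|μ| ≤ 1 - c`. For the Metropolis chain the
minorization holds with `c π_j = (1/(2N)) e^{-β(λ_j - λ_1)}`, since `λ_1` is the least
energy and the diagonal entries are at least `1/2`.
-/

open Finset

/-- The Gibbs distribution `π_i = e^{−βλ_i}/Z(β)` on `{1,…,N}`. -/
noncomputable def gibbsDist {N : ℕ} (lam : Fin N → ℝ) (β : ℝ) (i : Fin N) : ℝ :=
  Real.exp (-(β * lam i)) / ∑ k, Real.exp (-(β * lam k))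

/-- The Metropolis–Hastings transition probabilities
`p_{ij} = (1/(2N)) min(1, e^{−β(λ_j−λ_i)})` for `i ≠ j`, `p_{ii} = 1 − ∑_{j≠i} p_{ij}`. -/
noncomputable def metropolisP {N : ℕ} (lam : Fin N → ℝ) (β : ℝ) (i j : Fin N) : ℝ :=
  if i = j then
    1 - ∑ k ∈ univ.erase i, (1 / (2 * N)) * min 1 (Real.exp (-(β * (lam k - lam i))))
  else (1 / (2 * N)) * min 1 (Real.exp (-(β * (lam j - lam i))))

theorem abs_eigenvalue_le_one_sub_of_minorization {ι : Type*} [Fintype ι]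
    {P : ι → ι → ℝ} {π v : ι → ℝ} {c μ : ℝ}
    (hrow : ∀ i, ∑ j, P i j = 1) (hπ : ∑ j, π j = 1) (hmin : ∀ i j, c * π j ≤ P i j)
    (hv : v ≠ 0) (horth : ∑ j, π j * v j = 0) (heig : ∀ i, ∑ j, P i j * v j = μ * v i) :
    |μ| ≤ 1 - c := by
  obtain ⟨j₀, hj₀⟩ := Function.ne_iff.mp hv
  have : Nonempty ι := ⟨j₀⟩
  obtain ⟨i, hi⟩ := Finite.exists_max fun j => |v j|
  have hvi : 0 < |v i| := (abs_pos.mpr hj₀).trans_le (hi j₀)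
  have hshift : μ * v i = ∑ j, (P i j - c * π j) * v j := by
    simp only [sub_mul, sum_sub_distrib, mul_assoc, ← mul_sum, horth, heig i, mul_zero, sub_zero]
  refine le_of_mul_le_mul_right ?_ hvi
  calc |μ| * |v i| = |∑ j, (P i j - c * π j) * v j| := by rw [← abs_mul, hshift]
    _ ≤ ∑ j, |(P i j - c * π j) * v j| := abs_sum_le_sum_abs _ _
    _ ≤ ∑ j, (P i j - c * π j) * |v i| := by
        refine sum_le_sum fun j _ => ?_
        rw [abs_mul, abs_of_nonneg (sub_nonneg.mpr (hmin i j))]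
        exact mul_le_mul_of_nonneg_left (hi j) (sub_nonneg.mpr (hmin i j))
    _ = (1 - c) * |v i| := by rw [← sum_mul, sum_sub_distrib, hrow i, ← mul_sum, hπ, mul_one]

section Metropolis

variable {N : ℕ} (lam : Fin N → ℝ) (β : ℝ)

theorem sum_gibbsDist [NeZero N] : ∑ i, gibbsDist lam β i = 1 := by
  simp only [gibbsDist, ← sum_div]
  exact div_self (sum_pos (fun k _ => Real.exp_pos _) univ_nonempty).ne'

theorem sum_exp_mul_gibbsDist (a : ℝ) (j : Fin N) :
    (∑ i, Real.exp (-(β * (lam i - a)))) * gibbsDist lam β j = Real.exp (-(β * (lam j - a))) := by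
  have hZ : 0 < ∑ k, Real.exp (-(β * lam k)) := sum_pos (fun k _ => Real.exp_pos _) ⟨j, mem_univ j⟩
  have hshift : ∑ i, Real.exp (-(β * (lam i - a))) = Real.exp (β * a) * ∑ k, Real.exp (-(β * lam k)) := by
    rw [mul_sum]
    exact sum_congr rfl fun i _ => by rw [← Real.exp_add]; ring_nf
  rw [hshift, gibbsDist, mul_div_assoc', mul_right_comm, mul_div_cancel_right₀ _ hZ.ne', ← Real.exp_add]
  ring_nf

theorem sum_metropolisP (i : Fin N) : ∑ j, metropolisP lam β i j = 1 := by
  have hoff : ∑ j ∈ univ.erase i, metropolisP lam β i j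
      = ∑ k ∈ univ.erase i, (1 / (2 * N)) * min 1 (Real.exp (-(β * (lam k - lam i)))) :=
    sum_congr rfl fun j hj => if_neg (ne_of_mem_erase hj).symm
  rw [← add_sum_erase _ _ (mem_univ i), hoff, metropolisP, if_pos rfl, sub_add_cancel]

theorem half_le_metropolisP_self [NeZero N] (i : Fin N) : 1 / 2 ≤ metropolisP lam β i i := by
  have hN : (0 : ℝ) < N := Nat.cast_pos.mpr (NeZero.pos N)
  have hterm : ∀ k ∈ univ.erase i,
      (1 / (2 * N)) * min 1 (Real.exp (-(β * (lam k - lam i)))) ≤ 1 / (2 * N) :=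
    fun k _ => mul_le_of_le_one_right (by positivity) (min_le_left _ _)
  have hcard : (#(univ.erase i) : ℝ) ≤ N := by
    exact_mod_cast card_erase_le.trans (card_univ.trans (Fintype.card_fin N)).le
  have hsum := sum_le_card_nsmul _ _ _ hterm
  rw [nsmul_eq_mul] at hsum
  have hhalf : (N : ℝ) * (1 / (2 * N)) = 1 / 2 := by field_simp
  rw [metropolisP, if_pos rfl]
  linarith [mul_le_mul_of_nonneg_right hcard (by positivity : (0 : ℝ) ≤ 1 / (2 * N))]

theorem metropolisP_ge_of_le_energy [NeZero N] (hβ : 0 ≤ β) {a : ℝ} (ha : ∀ k, a ≤ lam k)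
    (i j : Fin N) : (1 / (2 * N)) * Real.exp (-(β * (lam j - a))) ≤ metropolisP lam β i j := by
  have hexp_le_one : Real.exp (-(β * (lam j - a))) ≤ 1 :=
    Real.exp_le_one_iff.mpr (neg_nonpos.mpr (mul_nonneg hβ (sub_nonneg.mpr (ha j))))
  by_cases hij : i = j
  · subst hij
    have hN : (1 : ℝ) ≤ N := Nat.one_le_cast.mpr (NeZero.one_le)
    calc (1 / (2 * N)) * Real.exp (-(β * (lam i - a))) ≤ 1 / (2 * N) :=
          mul_le_of_le_one_right (by positivity) hexp_le_one
      _ ≤ 1 / 2 := by gcongr; linarith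
      _ ≤ metropolisP lam β i i := half_le_metropolisP_self lam β i
  · rw [metropolisP, if_neg hij]
    gcongr
    refine le_min hexp_le_one (Real.exp_le_exp.mpr ?_)
    gcongr
    exact ha i

end Metropolis

/-- For energies `λ_1 ≤ … ≤ λ_N` and inverse temperature `β ≥ 0`, the
spectral gap of the Metropolis–Hastings chain is at least
`(1/(2N)) ∑_{i=1}^N e^{−β(λ_i − λ_1)}`: every eigenvalue `μ` of the transition matrix
with eigenfunction orthogonal to constants in `ℓ²(π)` satisfies `μ ≤ 1` minus this bound. -/
theorem metropolis_spectral_gap_lower_bound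
    {N : ℕ} [NeZero N] (lam : Fin N → ℝ) (hmono : Monotone lam)
    (β : ℝ) (hβ : 0 ≤ β)
    (μ : ℝ) (v : Fin N → ℝ) (hv : v ≠ 0)
    (horth : ∑ i, gibbsDist lam β i * v i = 0)
    (heig : ∀ i, ∑ j, metropolisP lam β i j * v j = μ * v i) :
    μ ≤ 1 - (1 / (2 * N)) * ∑ i, Real.exp (-(β * (lam i - lam 0))) := by
  have hminorize : ∀ i j, (1 / (2 * N)) * (∑ k, Real.exp (-(β * (lam k - lam 0))))
      * gibbsDist lam β j ≤ metropolisP lam β i j := by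
    intro i j
    rw [mul_assoc, sum_exp_mul_gibbsDist]
    exact metropolisP_ge_of_le_energy lam β hβ (fun k => hmono (Fin.zero_le k)) i j
  exact (le_abs_self μ).trans <| abs_eigenvalue_le_one_sub_of_minorization
    (sum_metropolisP lam β) (sum_gibbsDist lam β) hminorize hv horth heig
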